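/- Let g be a finite simple connected graph and M a minimal dominating set of g. Then M is a strong minimal dominating set of g if and only if for every vertex p outside M, the set of edges joining p to its neighbors in M is a cut-set of g. -/

import Mathlib

open SimpleGraph

variable {V : Type*}

/-- `D` is a dominating set of `g`. -/
def IsDomSet (g : SimpleGraph V) (D : Set V) : Prop :=
  ∀ v ∉ D, ∃ u ∈ D, g.Adj v u

/-- `D` is a minimal dominating set of `g`. -/
def IsMinDomSet (g : SimpleGraph V) (D : Set V) : Prop :=
  IsDomSet g D ∧ ∀ D' ⊂ D, ¬ IsDomSet g D'

/-- `M` is a strong minimal dominating set of `g`: it is a minimal dominating set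
of every connected spanning subgraph of `g`. -/
def IsSMDS (g : SimpleGraph V) (M : Set V) : Prop :=
  ∀ h : SimpleGraph V, h ≤ g → h.Connected → IsMinDomSet h M

/-- The set of edges joining `p` to its neighbors in `M`. -/
def domEdges (g : SimpleGraph V) (M : Set V) (p : V) : Set (Sym2 V) :=
  {e | ∃ q ∈ M, g.Adj p q ∧ e = s(p, q)}

/-- `F` is a cut-set of the connected graph `g`: deleting `F` disconnects `g`. -/
def IsCutSet (g : SimpleGraph V) (F : Set (Sym2 V)) : Prop :=
  ¬ (g.deleteEdges F).Connected

/-! A vertex `p ∉ M` has no `M`-neighbour in a spanning subgraph `h ≤ g` exactly when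
`h ≤ g.deleteEdges (domEdges g M p)`, so `M` dominates every connected spanning subgraph iff
none of these edge deletions is connected. Minimality is inherited for free: a dominating set of a
subgraph also dominates `g`. -/

theorem IsDomSet.mono {g h : SimpleGraph V} {D : Set V} (hle : h ≤ g) (hD : IsDomSet h D) :
    IsDomSet g D :=
  fun v hv => (hD v hv).imp fun _ hu => ⟨hu.1, hle hu.2⟩

theorem IsMinDomSet.of_le {g h : SimpleGraph V} {M : Set V} (hM : IsMinDomSet g M) (hle : h ≤ g)
    (hdom : IsDomSet h M) : IsMinDomSet h M :=
  ⟨hdom, fun D' hD' hD'dom => hM.2 D' hD' (hD'dom.mono hle)⟩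

theorem not_adj_deleteEdges_domEdges {g : SimpleGraph V} {M : Set V} {p q : V} (hq : q ∈ M) :
    ¬ (g.deleteEdges (domEdges g M p)).Adj p q := by
  rw [deleteEdges_adj]
  exact fun ⟨hpq, hnot⟩ => hnot ⟨q, hq, hpq, rfl⟩

theorem le_deleteEdges_domEdges {g h : SimpleGraph V} {M : Set V} {p : V} (hle : h ≤ g)
    (hp : ∀ q ∈ M, ¬ h.Adj p q) : h ≤ g.deleteEdges (domEdges g M p) := by
  intro a b hab
  refine deleteEdges_adj.2 ⟨hle hab, ?_⟩
  rintro ⟨q, hq, -, he⟩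
  rcases Sym2.eq_iff.1 he with ⟨rfl, rfl⟩ | ⟨rfl, rfl⟩
  · exact hp b hq hab
  · exact hp a hq hab.symm

theorem smds_iff_cutsets_general (g : SimpleGraph V)
    (M : Set V) (hM : IsMinDomSet g M) :
    IsSMDS g M ↔ ∀ p ∉ M, IsCutSet g (domEdges g M p) := by
  constructor
  · intro hS p hp hcon
    obtain ⟨q, hq, hpq⟩ := (hS _ (deleteEdges_le _) hcon).1 p hp
    exact not_adj_deleteEdges_domEdges hq hpq
  · intro hC h hle hcon
    refine hM.of_le hle fun p hp => ?_
    by_contra! hno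
    exact hC p hp (hcon.mono (le_deleteEdges_domEdges hle hno))

theorem smds_iff_cutsets [Fintype V] (g : SimpleGraph V) (hg : g.Connected)
    (M : Set V) (hM : IsMinDomSet g M) :
    IsSMDS g M ↔ ∀ p ∉ M, IsCutSet g (domEdges g M p) :=
  smds_iff_cutsets_general g M hM
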